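/- Let λ : ℝⁿ → (0,∞) be a continuous weight function satisfying the sub-additive condition (SA), condition (SH) (λ(tξ) ≤ C λ(ξ) for |t| ≤ 1), and the polynomial growth condition (PG): (1/C)(1+|ξ|)^ν ≤ λ(ξ) ≤ C(1+|ξ|)^μ for constants C ≥ 1 and 0 < ν ≤ μ. Then for every ε > 0 there exists 0 < ε′ < ε such that for every set X ⊂ ℝⁿ one has (X_{[ε′λ]})_{ε′λ} ⊂ X_{[ελ]}. -/

import Mathlib

/-!
If `ξ` is within `ε' λ(η)^{1/μ}` of a point `η` with `λ(η - ξ₀) < ε' λ(ξ₀)`, then (SA) gives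
`λ(η) ≤ 2C λ(ξ₀)`, so `|ξ - η|^μ ≤ 2C ε'^μ λ(ξ₀)` and the upper bound of (PG) yields
`λ(ξ - η) ≲ 1 + ε'^μ λ(ξ₀)`. The lower bound of (PG) turns `λ(η - ξ₀) < ε' λ(ξ₀)` into
`1 ≤ C₀ ε' λ(ξ₀)`, which absorbs the constant term. A second application of (SA) then gives
`λ(ξ - ξ₀) < f(ε') λ(ξ₀)` for an explicit `f` with `f(ε') → 0` as `ε' → 0⁺`.
-/

open MeasureTheory
open scoped ENNReal

/-- The temperance condition (T). -/
def IsTemperate {n : ℕ} (ω : EuclideanSpace ℝ (Fin n) → ℝ) : Prop :=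
  ∃ C N : ℝ, 0 < C ∧ 0 < N ∧ ∀ ξ η, ω ξ ≤ C * (1 + ‖ξ - η‖) ^ N * ω η

/-- The sub-additive condition (SA). -/
def IsSubAdditiveWeight {n : ℕ} (ω : EuclideanSpace ℝ (Fin n) → ℝ) : Prop :=
  ∃ C : ℝ, 0 < C ∧ ∀ ξ η, ω ξ ≤ C * (ω (ξ - η) + ω η)

/-- Condition (SH): `ω(tξ) ≤ C ω(ξ)` for all `ξ` and `|t| ≤ 1`. -/
def SatisfiesSH {n : ℕ} (ω : EuclideanSpace ℝ (Fin n) → ℝ) : Prop :=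
  ∃ C : ℝ, 0 < C ∧ ∀ (ξ : EuclideanSpace ℝ (Fin n)) (t : ℝ), |t| ≤ 1 → ω (t • ξ) ≤ C * ω ξ

/-- The `[λ]`-neighborhood of size `ε` of a set `X ⊆ ℝⁿ`:
`X_{[ελ]} = ⋃_{ξ₀ ∈ X} {ξ : λ(ξ - ξ₀) < ε λ(ξ₀)}`. -/
def brNbhd {n : ℕ} (lam : EuclideanSpace ℝ (Fin n) → ℝ) (ε : ℝ)
    (X : Set (EuclideanSpace ℝ (Fin n))) : Set (EuclideanSpace ℝ (Fin n)) :=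
  ⋃ ξ₀ ∈ X, {ξ | lam (ξ - ξ₀) < ε * lam ξ₀}

/-- The `λ`-neighborhood of size `ε` of a set `X ⊆ ℝⁿ`:
`X_{ελ} = ⋃_{ξ₀ ∈ X} {ξ : |ξ - ξ₀| < ε λ(ξ₀)^(1/μ)}`. -/
def eucNbhd {n : ℕ} (lam : EuclideanSpace ℝ (Fin n) → ℝ) (μ ε : ℝ)
    (X : Set (EuclideanSpace ℝ (Fin n))) : Set (EuclideanSpace ℝ (Fin n)) :=
  ⋃ ξ₀ ∈ X, {ξ | ‖ξ - ξ₀‖ < ε * lam ξ₀ ^ μ⁻¹}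

open Filter Topology

lemma Real.add_rpow_le_two_rpow_mul_rpow_add_rpow {p a b : ℝ} (ha : 0 ≤ a) (hb : 0 ≤ b)
    (hp : 0 ≤ p) : (a + b) ^ p ≤ 2 ^ p * (a ^ p + b ^ p) := calc
  (a + b) ^ p ≤ (2 * max a b) ^ p := by rw [two_mul]; gcongr <;> simp
  _ = 2 ^ p * max a b ^ p := Real.mul_rpow zero_le_two (le_max_of_le_left ha)
  _ ≤ 2 ^ p * (a ^ p + b ^ p) := by
    gcongr
    rcases le_total a b with h | h
    · rw [max_eq_right h]; linarith [Real.rpow_nonneg ha p]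
    · rw [max_eq_left h]; linarith [Real.rpow_nonneg hb p]

lemma Real.rpow_le_rpow_mul_of_le_mul_rpow_inv {a b c μ : ℝ} (ha : 0 ≤ a) (hb : 0 ≤ b)
    (hc : 0 ≤ c) (hμ : 0 < μ) (h : a ≤ b * c ^ μ⁻¹) : a ^ μ ≤ b ^ μ * c := calc
  a ^ μ ≤ (b * c ^ μ⁻¹) ^ μ := Real.rpow_le_rpow ha h hμ.le
  _ = b ^ μ * c := by
    rw [Real.mul_rpow hb (Real.rpow_nonneg hc _), Real.rpow_inv_rpow hc hμ.ne']

/-- `λ(ξ - ξ₀) < nbhdFactor C C₀ μ ε' * λ(ξ₀)` for `ξ ∈ (X_{[ε'λ]})_{ε'λ}`, where `C` is the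
constant of (SA) and `C₀`, `μ` are those of (PG). -/
noncomputable def nbhdFactor (C C₀ μ t : ℝ) : ℝ := C * (C₀ * 2 ^ μ * (C₀ * t + 2 * C * t ^ μ) + t)

lemma tendsto_nbhdFactor_nhdsGT_zero {C C₀ μ : ℝ} (hμ : 0 < μ) :
    Tendsto (nbhdFactor C C₀ μ) (𝓝[>] 0) (𝓝 0) := by
  have hcont : Continuous (nbhdFactor C C₀ μ) := by
    unfold nbhdFactor
    fun_prop (disch := exact hμ.le)
  simpa [nbhdFactor, Real.zero_rpow hμ.ne'] using
    (hcont.tendsto 0).mono_left nhdsWithin_le_nhds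

section Weight

variable {E : Type*} [SeminormedAddCommGroup E] {lam : E → ℝ} {C C₀ ν μ ε' : ℝ}

lemma inv_le_of_lower_growth (hlow : ∀ ξ, C₀⁻¹ * (1 + ‖ξ‖) ^ ν ≤ lam ξ) (hC₀ : 0 ≤ C₀)
    (hν : 0 ≤ ν) (ξ : E) : C₀⁻¹ ≤ lam ξ :=
  (le_mul_of_one_le_right (inv_nonneg.2 hC₀)
    (Real.one_le_rpow (by linarith [norm_nonneg ξ]) hν)).trans (hlow ξ)

lemma le_two_rpow_mul_of_upper_growth (hup : ∀ ξ, lam ξ ≤ C₀ * (1 + ‖ξ‖) ^ μ) (hC₀ : 0 ≤ C₀)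
    (hμ : 0 ≤ μ) (ξ : E) : lam ξ ≤ C₀ * 2 ^ μ * (1 + ‖ξ‖ ^ μ) := calc
  lam ξ ≤ C₀ * (1 + ‖ξ‖) ^ μ := hup ξ
  _ ≤ C₀ * (2 ^ μ * (1 ^ μ + ‖ξ‖ ^ μ)) := by
    gcongr
    exact Real.add_rpow_le_two_rpow_mul_rpow_add_rpow zero_le_one (norm_nonneg ξ) hμ
  _ = C₀ * 2 ^ μ * (1 + ‖ξ‖ ^ μ) := by rw [Real.one_rpow, mul_assoc]

lemma le_two_mul_of_sub_lt (hSA : ∀ ξ η, lam ξ ≤ C * (lam (ξ - η) + lam η)) (hC : 0 ≤ C)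
    (hε' : ε' ≤ 1) {η ξ₀ : E} (hξ₀ : 0 < lam ξ₀) (h : lam (η - ξ₀) < ε' * lam ξ₀) :
    lam η ≤ 2 * C * lam ξ₀ := calc
  lam η ≤ C * (lam (η - ξ₀) + lam ξ₀) := hSA η ξ₀
  _ ≤ C * (1 * lam ξ₀ + lam ξ₀) := by gcongr; exact h.le.trans (by gcongr)
  _ = 2 * C * lam ξ₀ := by ring

lemma sub_lt_nbhdFactor_mul (hpos : ∀ ξ, 0 < lam ξ)
    (hSA : ∀ ξ η, lam ξ ≤ C * (lam (ξ - η) + lam η)) (hC : 0 < C) (hC₀ : 0 < C₀) (hμ : 0 < μ)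
    (hlow : ∀ ξ, C₀⁻¹ ≤ lam ξ) (hup : ∀ ξ, lam ξ ≤ C₀ * (1 + ‖ξ‖) ^ μ)
    (hε'₀ : 0 < ε') (hε'₁ : ε' ≤ 1) {ξ η ξ₀ : E}
    (hη : lam (η - ξ₀) < ε' * lam ξ₀) (hξ : ‖ξ - η‖ < ε' * lam η ^ μ⁻¹) :
    lam (ξ - ξ₀) < nbhdFactor C C₀ μ ε' * lam ξ₀ := by
  set L := lam ξ₀
  have hL : 0 < L := hpos ξ₀
  have hηL : lam η ≤ 2 * C * L := le_two_mul_of_sub_lt hSA hC.le hε'₁ hL hη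
  -- `λ(η - ξ₀)` is bounded below, so `λ(ξ₀)` must be large compared to `1 / ε'`.
  have hone : 1 ≤ C₀ * ε' * L := by
    have := (hlow (η - ξ₀)).trans hη.le
    rw [inv_le_iff_one_le_mul₀' hC₀] at this
    linarith
  have hnorm : ‖ξ - η‖ ^ μ ≤ ε' ^ μ * (2 * C * L) :=
    (Real.rpow_le_rpow_mul_of_le_mul_rpow_inv (norm_nonneg _) hε'₀.le (hpos η).le hμ
      hξ.le).trans (by gcongr)
  have hξη : lam (ξ - η) ≤ C₀ * 2 ^ μ * (C₀ * ε' * L + ε' ^ μ * (2 * C * L)) :=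
    (le_two_rpow_mul_of_upper_growth hup hC₀.le hμ.le _).trans (by gcongr)
  calc lam (ξ - ξ₀) ≤ C * (lam (ξ - η) + lam (η - ξ₀)) := by
        simpa using hSA (ξ - ξ₀) (η - ξ₀)
    _ < C * (C₀ * 2 ^ μ * (C₀ * ε' * L + ε' ^ μ * (2 * C * L)) + ε' * L) :=
        mul_lt_mul_of_pos_left (add_lt_add_of_le_of_lt hξη hη) hC
    _ = nbhdFactor C C₀ μ ε' * L := by unfold nbhdFactor; ring

end Weight

theorem eucNbhd_of_brNbhd_subset_brNbhd_general {n : ℕ}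
    (lam : EuclideanSpace ℝ (Fin n) → ℝ) (C₀ ν μ : ℝ)
    (hlam_pos : ∀ ξ, 0 < lam ξ)
    (hSA : IsSubAdditiveWeight lam)
    (hC₀ : 1 ≤ C₀) (hν : 0 < ν) (hνμ : ν ≤ μ)
    (hPG : ∀ ξ, C₀⁻¹ * (1 + ‖ξ‖) ^ ν ≤ lam ξ ∧ lam ξ ≤ C₀ * (1 + ‖ξ‖) ^ μ) :
    ∀ ε : ℝ, 0 < ε → ∃ ε' : ℝ, 0 < ε' ∧ ε' < ε ∧
      ∀ X : Set (EuclideanSpace ℝ (Fin n)),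
        eucNbhd lam μ ε' (brNbhd lam ε' X) ⊆ brNbhd lam ε X := by
  obtain ⟨C, hC, hSA⟩ := hSA
  have hμ : 0 < μ := hν.trans_le hνμ
  have hC₀' : 0 < C₀ := one_pos.trans_le hC₀
  have hlow : ∀ ξ, C₀⁻¹ ≤ lam ξ :=
    inv_le_of_lower_growth (fun ξ => (hPG ξ).1) hC₀'.le hν.le
  intro ε hε
  obtain ⟨ε', hfactor, hε'₀, hε'min⟩ :=
    (((tendsto_nbhdFactor_nhdsGT_zero hμ).eventually_lt_const hε).and
      (Ioo_mem_nhdsGT (lt_min hε one_pos))).exists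
  obtain ⟨hε'ε, hε'₁⟩ := lt_min_iff.1 hε'min
  refine ⟨ε', hε'₀, hε'ε, fun X ξ hξ => ?_⟩
  simp only [eucNbhd, brNbhd, Set.mem_iUnion, Set.mem_ofPred_eq] at hξ ⊢
  obtain ⟨η, ⟨ξ₀, hξ₀X, hη⟩, hξη⟩ := hξ
  refine ⟨ξ₀, hξ₀X, ?_⟩
  calc lam (ξ - ξ₀) < nbhdFactor C C₀ μ ε' * lam ξ₀ :=
        sub_lt_nbhdFactor_mul hlam_pos hSA hC hC₀' hμ hlow (fun ξ => (hPG ξ).2) hε'₀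
          hε'₁.le hη hξη
    _ < ε * lam ξ₀ := by gcongr; exact hlam_pos ξ₀

/-- Let `λ` be a continuous, positive weight satisfying (SA), (SH) and the polynomial
growth condition (PG) with constants `C₀ ≥ 1`, `0 < ν ≤ μ`.  Then for every `ε > 0` there
is `0 < ε' < ε` such that for every `X ⊆ ℝⁿ`: `(X_{[ε'λ]})_{ε'λ} ⊆ X_{[ελ]}`. -/
theorem eucNbhd_of_brNbhd_subset_brNbhd {n : ℕ}
    (lam : EuclideanSpace ℝ (Fin n) → ℝ) (C₀ ν μ : ℝ)
    (hlam_pos : ∀ ξ, 0 < lam ξ) (hlam_cont : Continuous lam)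
    (hlam_temp : IsTemperate lam)
    (hSA : IsSubAdditiveWeight lam) (hSH : SatisfiesSH lam)
    (hC₀ : 1 ≤ C₀) (hν : 0 < ν) (hνμ : ν ≤ μ)
    (hPG : ∀ ξ, C₀⁻¹ * (1 + ‖ξ‖) ^ ν ≤ lam ξ ∧ lam ξ ≤ C₀ * (1 + ‖ξ‖) ^ μ) :
    ∀ ε : ℝ, 0 < ε → ∃ ε' : ℝ, 0 < ε' ∧ ε' < ε ∧
      ∀ X : Set (EuclideanSpace ℝ (Fin n)),
        eucNbhd lam μ ε' (brNbhd lam ε' X) ⊆ brNbhd lam ε X :=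
  eucNbhd_of_brNbhd_subset_brNbhd_general lam C₀ ν μ hlam_pos hSA hC₀ hν hνμ hPG
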